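/- arXiv:1409.2978 — 2 statements merged into one kernel-verified Lean document; each statement's English description precedes it below -/
import Mathlib

section
/- The bound d·μ(C') + 1 ≥ μ(C) for axiom downloads is tight: for the d-star graph G (center v connected to petals u₁,…,u_d) with χ(v) = 1 and χ(u_i) = 0 for all i, taking C = ∅ and C' = {A} where A = x_{e₁} ∨ ⋯ ∨ x_{e_d} is the axiom at the center, one has μ(C) = d + 1 and μ(C') = 1, so d·μ(C') + 1 = μ(C). -/
/-- A literal over Boolean variables of type `X`: a variable together with a sign. -/
abbrev Lit (X : Type) := X × Bool

/-- A clause: a finite set of literals, interpreted disjunctively. -/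
abbrev Clause (X : Type) := Finset (Lit X)

/-- A configuration: a finite set of clauses, interpreted conjunctively. -/
abbrev Config (X : Type) := Finset (Clause X)

/-- The negation of a literal. -/
def negLit {X : Type} (l : Lit X) : Lit X := (l.1, !l.2)

/-- A clause (or term) is trivial if it contains both a variable and its negation. -/
def IsTrivialClause {X : Type} (C : Clause X) : Prop :=
  ∃ v : X, (v, true) ∈ C ∧ (v, false) ∈ C

/-- A total assignment satisfies a literal. -/
def SatLit {X : Type} (α : X → Bool) (l : Lit X) : Prop := α l.1 = l.2

/-- A total assignment satisfies a clause (some literal is true). -/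
def SatClause {X : Type} (α : X → Bool) (C : Clause X) : Prop := ∃ l ∈ C, SatLit α l

/-- A total assignment satisfies a term (all literals are true). -/
def SatTerm {X : Type} (α : X → Bool) (T : Finset (Lit X)) : Prop := ∀ l ∈ T, SatLit α l

/-- A total assignment satisfies a configuration (all clauses are true). -/
def SatConfig {X : Type} (α : X → Bool) (𝒞 : Config X) : Prop := ∀ C ∈ 𝒞, SatClause α C

/-- The term `¬E` negating a clause `E`. -/
def negTerm {X : Type} [DecidableEq X] (E : Clause X) : Finset (Lit X) := E.image negLit

/-- The edges of `G` incident to the vertex `v`. -/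
def incidentEdges {V : Type} [Fintype V] [DecidableEq V] (G : SimpleGraph V)
    [DecidableRel G.Adj] (v : V) : Finset (Sym2 V) :=
  G.edgeFinset.filter (fun e => v ∈ e)

/-- The canonical CNF encoding `PARITY_{v,χ}` of the parity constraint
`∑_{e ∋ v} x_e ≡ χ(v) (mod 2)`: for each assignment `f` of the edge variables
violating the constraint at `v`, the clause over the edges incident to `v`
falsified exactly by `f`. -/
def parityCNF {V : Type} [Fintype V] [DecidableEq V] (G : SimpleGraph V)
    [DecidableRel G.Adj] (χ : V → ZMod 2) (v : V) : Set (Clause (Sym2 V)) :=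
  { C | ∃ f : Sym2 V → Bool,
      (∑ e ∈ incidentEdges G v, (if f e then (1 : ZMod 2) else 0)) ≠ χ v ∧
      C = (incidentEdges G v).image (fun e => (e, ! f e)) }

/-- The Tseitin formula `Ts(G, χ) = ⋀_{v ∈ V} PARITY_{v,χ}`, as a set of clauses
over the edge variables. -/
def Tseitin {V : Type} [Fintype V] [DecidableEq V] (G : SimpleGraph V)
    [DecidableRel G.Adj] (χ : V → ZMod 2) : Set (Clause (Sym2 V)) :=
  ⋃ v : V, parityCNF G χ v

/-- The assignment `α` to the edge variables satisfies the parity constraint at `v`. -/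
def SatParity {V : Type} [Fintype V] [DecidableEq V] (G : SimpleGraph V)
    [DecidableRel G.Adj] (χ : V → ZMod 2) (α : Sym2 V → Bool) (v : V) : Prop :=
  (∑ e ∈ incidentEdges G v, (if α e then (1 : ZMod 2) else 0)) = χ v

/-- The term `T` together with the parity axioms of the vertices in `V'` is
unsatisfiable. -/
def UnsatWith {V : Type} [Fintype V] [DecidableEq V] (G : SimpleGraph V)
    [DecidableRel G.Adj] (χ : V → ZMod 2) (T : Finset (Lit (Sym2 V)))
    (V' : Finset V) : Prop :=
  ¬ ∃ α : Sym2 V → Bool, SatTerm α T ∧ ∀ v ∈ V', ∀ C ∈ parityCNF G χ v, SatClause α C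

/-- The term complexity measure: `μ(T)` is the least number of parity axioms of
`Ts(G,χ)` that together with `T` are contradictory. -/
noncomputable def muT {V : Type} [Fintype V] [DecidableEq V] (G : SimpleGraph V)
    [DecidableRel G.Adj] (χ : V → ZMod 2) (T : Finset (Lit (Sym2 V))) : ℕ :=
  sInf { n : ℕ | ∃ V' : Finset V, V'.card = n ∧ UnsatWith G χ T V' }

/-- The configuration complexity measure: `μ(𝒞)` is the maximum of `μ(T)` over
all terms `T` implying the configuration `𝒞`. -/
noncomputable def muC {V : Type} [Fintype V] [DecidableEq V] (G : SimpleGraph V)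
    [DecidableRel G.Adj] (χ : V → ZMod 2) (𝒞 : Config (Sym2 V)) : ℕ :=
  sSup { m : ℕ | ∃ T : Finset (Lit (Sym2 V)),
    (∀ α : Sym2 V → Bool, SatTerm α T → SatConfig α 𝒞) ∧ muT G χ T = m }

/-- The `d`-star graph: a center (vertex `0`) joined to `d` petals. -/
def starGraph (d : ℕ) : SimpleGraph (Fin (d + 1)) where
  Adj i j := i ≠ j ∧ (i = 0 ∨ j = 0)
  symm := ⟨by
    rintro i j ⟨h1, h2⟩
    exact ⟨h1.symm, h2.symm⟩⟩
  loopless := ⟨fun i h => h.1 rfl⟩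

instance (d : ℕ) : DecidableRel (starGraph d).Adj :=
  fun i j => inferInstanceAs (Decidable (i ≠ j ∧ (i = 0 ∨ j = 0)))

/-- The charge function for the star: charge `1` at the center, `0` at the petals. -/
def starCharge (d : ℕ) : Fin (d + 1) → ZMod 2 := fun i => if i = 0 then 1 else 0

/-- The axiom `A = x_{e₁} ∨ ⋯ ∨ x_{e_d}` at the center of the star. -/
def starAxiom (d : ℕ) : Clause (Sym2 (Fin (d + 1))) :=
  (Finset.univ.erase (0 : Fin (d + 1))).image
    (fun i => (s((0 : Fin (d + 1)), i), true))

/-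
Summing the parity constraints over all vertices counts every edge variable twice, so the
axioms of all `d + 1` vertices contradict the odd total charge, while dropping any vertex `w`
leaves them satisfiable (set only the edge `{0, w}` to true). Hence the empty term has measure
`d + 1`, the largest possible. A satisfiable term implying `A` must contain some positive
literal `x_{e_i}`, which the petal axiom `¬x_{e_i}` refutes, so every term implying `A` has
measure at most `1`, attained by `x_{e_1}`.
-/

section Tseitin

variable {V : Type} [Fintype V] [DecidableEq V] (G : SimpleGraph V) [DecidableRel G.Adj]
  (χ : V → ZMod 2)

theorem forall_satClause_parityCNF_iff (α : Sym2 V → Bool) (v : V) :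
    (∀ C ∈ parityCNF G χ v, SatClause α C) ↔ SatParity G χ α v := by
  constructor
  · intro h
    by_contra hp
    obtain ⟨l, hl, hsat⟩ := h _ ⟨α, hp, rfl⟩
    obtain ⟨e, -, rfl⟩ := Finset.mem_image.1 hl
    simp [SatLit] at hsat
  · rintro hp C ⟨f, hf, rfl⟩
    obtain ⟨e, he, hne⟩ : ∃ e ∈ incidentEdges G v, α e ≠ f e := by
      by_contra! hc
      exact hf (hp ▸ Finset.sum_congr rfl fun e he => by rw [hc e he])
    exact ⟨(e, !f e), Finset.mem_image_of_mem _ he, Bool.eq_not.2 hne⟩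

theorem unsatWith_iff (T : Finset (Lit (Sym2 V))) (V' : Finset V) :
    UnsatWith G χ T V' ↔ ¬ ∃ α, SatTerm α T ∧ ∀ v ∈ V', SatParity G χ α v := by
  simp only [UnsatWith, forall_satClause_parityCNF_iff]

theorem sum_sum_incidentEdges_eq_zero (f : Sym2 V → ZMod 2) :
    ∑ v, ∑ e ∈ incidentEdges G v, f e = 0 := by
  rw [Finset.sum_comm' (t' := G.edgeFinset) (s' := fun e => e.toFinset)
    (fun v e => by simp [incidentEdges, Sym2.mem_toFinset, and_comm])]
  refine Finset.sum_eq_zero fun e he => ?_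
  rw [Finset.sum_const, Sym2.card_toFinset_of_not_isDiag e
    (G.not_isDiag_of_mem_edgeSet (SimpleGraph.mem_edgeFinset.1 he))]
  exact CharTwo.two_nsmul (f e)

variable {χ}

theorem unsatWith_univ_of_sum_ne_zero (hχ : ∑ v, χ v ≠ 0) (T : Finset (Lit (Sym2 V))) :
    UnsatWith G χ T Finset.univ := by
  rw [unsatWith_iff]
  rintro ⟨α, -, hα⟩
  refine hχ ?_
  rw [← Finset.sum_congr rfl hα]
  exact sum_sum_incidentEdges_eq_zero G _

theorem unsatWith_empty_iff {T : Finset (Lit (Sym2 V))} :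
    UnsatWith G χ T ∅ ↔ ¬ ∃ α, SatTerm α T := by
  simp [unsatWith_iff]

end Tseitin

section Measure

variable {V : Type} [Fintype V] [DecidableEq V] {G : SimpleGraph V} [DecidableRel G.Adj]
  {χ : V → ZMod 2} {T : Finset (Lit (Sym2 V))}

theorem muT_le_card_of_unsatWith {V' : Finset V} (h : UnsatWith G χ T V') :
    muT G χ T ≤ V'.card :=
  Nat.sInf_le ⟨V', rfl, h⟩

theorem le_muT {n : ℕ} (hT : ∃ V', UnsatWith G χ T V')
    (hn : ∀ V', UnsatWith G χ T V' → n ≤ V'.card) : n ≤ muT G χ T := by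
  obtain ⟨V', hV'⟩ := hT
  exact le_csInf ⟨_, V', rfl, hV'⟩ fun _ ⟨V', hcard, hV'⟩ => hcard ▸ hn V' hV'

theorem muT_le_card_of_sum_ne_zero (hχ : ∑ v, χ v ≠ 0) : muT G χ T ≤ Fintype.card V :=
  muT_le_card_of_unsatWith (unsatWith_univ_of_sum_ne_zero G hχ T)

theorem muT_eq_zero_of_not_sat (h : ¬ ∃ α, SatTerm α T) : muT G χ T = 0 :=
  Nat.le_zero.1 (muT_le_card_of_unsatWith ((unsatWith_empty_iff G).2 h))

theorem muC_eq_of_isGreatest {𝒞 : Config (Sym2 V)} {n : ℕ}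
    (hT : ∃ T, (∀ α, SatTerm α T → SatConfig α 𝒞) ∧ muT G χ T = n)
    (hn : ∀ T, (∀ α, SatTerm α T → SatConfig α 𝒞) → muT G χ T ≤ n) :
    muC G χ 𝒞 = n :=
  IsGreatest.csSup_eq ⟨hT, fun _ ⟨T, hT, hm⟩ => hm ▸ hn T hT⟩

end Measure

theorem satTerm_decide_mem_of_exists {X : Type} [DecidableEq X] {T : Finset (Lit X)}
    (h : ∃ α, SatTerm α T) : SatTerm (fun x => decide ((x, true) ∈ T)) T := by
  obtain ⟨α, hα⟩ := h
  rintro ⟨x, _ | _⟩ hl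
  · have : (x, true) ∉ T := fun ht => by
      have hf : α x = false := hα _ hl
      have ht : α x = true := hα _ ht
      simp [hf] at ht
    simpa [SatLit] using this
  · simpa [SatLit] using hl

section Star

variable {d : ℕ}

theorem incidentEdges_starGraph_zero :
    incidentEdges (starGraph d) 0 = (Finset.univ.erase 0).image (fun i => s(0, i)) := by
  ext e
  induction e using Sym2.inductionOn with
  | hf a b =>
    simp only [incidentEdges, Finset.mem_filter, SimpleGraph.mem_edgeFinset,
      SimpleGraph.mem_edgeSet, Finset.mem_image, Finset.mem_erase, Finset.mem_univ,
      and_true, Sym2.mem_iff]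
    constructor
    · rintro ⟨⟨hne, h0⟩, hv⟩
      rcases h0 with rfl | rfl
      · exact ⟨b, fun hb => hne hb.symm, rfl⟩
      · exact ⟨a, fun ha => hne ha, Sym2.eq_swap⟩
    · rintro ⟨i, hi, he⟩
      rw [Sym2.eq_iff] at he
      rcases he with ⟨rfl, rfl⟩ | ⟨rfl, rfl⟩
      · exact ⟨⟨fun h => hi h.symm, Or.inl rfl⟩, Or.inl rfl⟩
      · exact ⟨⟨hi, Or.inr rfl⟩, Or.inr rfl⟩

theorem incidentEdges_starGraph_of_ne_zero {i : Fin (d + 1)} (hi : i ≠ 0) :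
    incidentEdges (starGraph d) i = {s(0, i)} := by
  ext e
  induction e using Sym2.inductionOn with
  | hf a b =>
    simp only [incidentEdges, Finset.mem_filter, SimpleGraph.mem_edgeFinset,
      SimpleGraph.mem_edgeSet, Finset.mem_singleton, Sym2.mem_iff]
    constructor
    · rintro ⟨⟨hne, h0⟩, hv⟩
      rcases h0 with rfl | rfl
      · rcases hv with rfl | rfl
        · exact absurd rfl hi
        · rfl
      · rcases hv with rfl | rfl
        · exact Sym2.eq_swap
        · exact absurd rfl hi
    · rintro he
      rw [Sym2.eq_iff] at he
      rcases he with ⟨rfl, rfl⟩ | ⟨rfl, rfl⟩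
      · exact ⟨⟨fun h => hi h.symm, Or.inl rfl⟩, Or.inr rfl⟩
      · exact ⟨⟨hi, Or.inr rfl⟩, Or.inl rfl⟩

theorem satParity_starGraph_zero_iff (α : Sym2 (Fin (d + 1)) → Bool) :
    SatParity (starGraph d) (starCharge d) α 0 ↔
      ∑ i ∈ Finset.univ.erase 0, (if α s(0, i) then (1 : ZMod 2) else 0) = 1 := by
  rw [SatParity, incidentEdges_starGraph_zero,
    Finset.sum_image fun _ _ _ _ h => Sym2.congr_right.1 h, starCharge, if_pos rfl]

theorem satParity_starGraph_iff_of_ne_zero {i : Fin (d + 1)} (hi : i ≠ 0)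
    (α : Sym2 (Fin (d + 1)) → Bool) :
    SatParity (starGraph d) (starCharge d) α i ↔ α s(0, i) = false := by
  rw [SatParity, incidentEdges_starGraph_of_ne_zero hi, Finset.sum_singleton, starCharge,
    if_neg hi]
  cases α s(0, i) <;> simp

theorem sum_starCharge : ∑ i, starCharge d i = 1 := by
  simp [starCharge]

theorem satParity_starGraph_of_ne {v w : Fin (d + 1)} (hvw : v ≠ w) :
    SatParity (starGraph d) (starCharge d) (fun e => decide (e = s(0, w))) v := by
  rcases eq_or_ne v 0 with rfl | hv
  · rw [satParity_starGraph_zero_iff]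
    simp only [Sym2.congr_right, decide_eq_true_eq]
    rw [Finset.sum_ite_eq']
    simp [hvw.symm]
  · rw [satParity_starGraph_iff_of_ne_zero hv]
    simpa [Sym2.congr_right, hv] using hvw

theorem unsatWith_starGraph_empty_iff (V' : Finset (Fin (d + 1))) :
    UnsatWith (starGraph d) (starCharge d) ∅ V' ↔ V' = Finset.univ := by
  refine ⟨fun h => ?_, fun h => h ▸ unsatWith_univ_of_sum_ne_zero _ (by simp [sum_starCharge]) ∅⟩
  refine Finset.eq_univ_iff_forall.2 fun w => ?_
  by_contra hw
  exact (unsatWith_iff _ _ _ _).1 h ⟨fun e => decide (e = s(0, w)), by simp [SatTerm],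
    fun v hv => satParity_starGraph_of_ne (ne_of_mem_of_not_mem hv hw)⟩

theorem unsatWith_starGraph_singleton {i : Fin (d + 1)} (hi : i ≠ 0)
    {T : Finset (Lit (Sym2 (Fin (d + 1))))} (hT : (s(0, i), true) ∈ T) :
    UnsatWith (starGraph d) (starCharge d) T {i} := by
  rw [unsatWith_iff]
  rintro ⟨α, hα, hpar⟩
  have := (satParity_starGraph_iff_of_ne_zero hi α).1 (hpar i (Finset.mem_singleton_self i))
  have htrue : α s(0, i) = true := hα _ hT
  simp [htrue] at this

theorem muT_starGraph_empty : muT (starGraph d) (starCharge d) ∅ = d + 1 := by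
  refine le_antisymm ?_ (le_muT ⟨_, (unsatWith_starGraph_empty_iff _).2 rfl⟩ fun V' h => ?_)
  · simpa using muT_le_card_of_sum_ne_zero (G := starGraph d) (T := ∅) (by simp [sum_starCharge])
  · simp [(unsatWith_starGraph_empty_iff V').1 h]

theorem muT_starGraph_le_one {T : Finset (Lit (Sym2 (Fin (d + 1))))}
    (hT : ∀ α, SatTerm α T → SatConfig α {starAxiom d}) :
    muT (starGraph d) (starCharge d) T ≤ 1 := by
  by_cases hsat : ∃ α, SatTerm α T
  · obtain ⟨l, hl, hsl⟩ := hT _ (satTerm_decide_mem_of_exists hsat) _ (Finset.mem_singleton_self _)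
    obtain ⟨i, hi, rfl⟩ := Finset.mem_image.1 hl
    have hiT : (s(0, i), true) ∈ T := of_decide_eq_true hsl
    simpa using muT_le_card_of_unsatWith
      (unsatWith_starGraph_singleton (Finset.ne_of_mem_erase hi) hiT)
  · simp [muT_eq_zero_of_not_sat hsat]

theorem muT_starGraph_petal {i : Fin (d + 1)} (hi : i ≠ 0) :
    muT (starGraph d) (starCharge d) {(s(0, i), true)} = 1 := by
  have hunsat := unsatWith_starGraph_singleton hi (Finset.mem_singleton_self (s(0, i), true))
  refine le_antisymm (by simpa using muT_le_card_of_unsatWith hunsat)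
    (le_muT ⟨_, hunsat⟩ fun V' h => Finset.card_pos.2 ?_)
  refine Finset.nonempty_iff_ne_empty.2 fun hV' => ?_
  refine (unsatWith_empty_iff _).1 (hV' ▸ h) ⟨fun _ => true, ?_⟩
  simp [SatTerm, SatLit]

theorem muC_starGraph_empty :
    muC (starGraph d) (starCharge d) (∅ : Config (Sym2 (Fin (d + 1)))) = d + 1 :=
  muC_eq_of_isGreatest ⟨∅, by simp [SatConfig], muT_starGraph_empty⟩ fun _ _ => by
    simpa using muT_le_card_of_sum_ne_zero (G := starGraph d) (by simp [sum_starCharge])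

theorem muC_starGraph_starAxiom (hd : 1 ≤ d) :
    muC (starGraph d) (starCharge d) {starAxiom d} = 1 := by
  have h1 : (⟨1, by omega⟩ : Fin (d + 1)) ≠ 0 := Fin.ne_of_val_ne one_ne_zero
  refine muC_eq_of_isGreatest ⟨_, fun α hα C hC => ?_, muT_starGraph_petal h1⟩
    fun _ => muT_starGraph_le_one
  rw [Finset.mem_singleton.1 hC]
  exact ⟨_, Finset.mem_image_of_mem _ (Finset.mem_erase.2 ⟨h1, Finset.mem_univ _⟩),
    hα _ (Finset.mem_singleton_self _)⟩

theorem starAxiom_mem_parityCNF : starAxiom d ∈ parityCNF (starGraph d) (starCharge d) 0 :=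
  ⟨fun _ => false, by simp [starCharge], by
    rw [incidentEdges_starGraph_zero, Finset.image_image]; rfl⟩

end Star

/-- the bound `d·μ(𝒞') + 1 ≥ μ(𝒞)` for axiom downloads is tight: for
the `d`-star with charge `1` at the center and `0` at the petals, taking `𝒞 = ∅`
and `𝒞' = {A}` for the axiom `A = x_{e₁} ∨ ⋯ ∨ x_{e_d}` at the center, one has
`μ(𝒞) = d + 1` and `μ(𝒞') = 1`, so `d·μ(𝒞') + 1 = μ(𝒞)`. -/
theorem star_measure_drop_tight (d : ℕ) (hd : 1 ≤ d) :
    starAxiom d ∈ parityCNF (starGraph d) (starCharge d) 0 ∧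
    muC (starGraph d) (starCharge d) (∅ : Config (Sym2 (Fin (d + 1)))) = d + 1 ∧
    muC (starGraph d) (starCharge d) ({starAxiom d} : Config (Sym2 (Fin (d + 1)))) = 1 ∧
    d * muC (starGraph d) (starCharge d) ({starAxiom d} : Config (Sym2 (Fin (d + 1)))) + 1
      = muC (starGraph d) (starCharge d) (∅ : Config (Sym2 (Fin (d + 1)))) := by
  refine ⟨starAxiom_mem_parityCNF, muC_starGraph_empty, muC_starGraph_starAxiom hd, ?_⟩
  rw [muC_starGraph_starAxiom hd, muC_starGraph_empty, mul_one]
end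

section
/- If a clause E is non-trivial and for some clause D no literal of D has its negation appearing in E, then there exists a total assignment satisfying the term ¬E and falsifying D. -/
/-- if `E` is a non-trivial clause and `D` is a (non-trivial) clause
none of whose literals has its negation appearing in `E`, then there is a total
assignment satisfying the term `¬E` (falsifying every literal of `E`) and
falsifying `D`. -/
theorem exists_assignment_sat_negE_falsify_D {X : Type} [DecidableEq X]
    (E D : Clause X) (hE : ¬ IsTrivialClause E) (hD : ¬ IsTrivialClause D)
    (h : ∀ l ∈ D, negLit l ∉ E) :
    ∃ α : X → Bool, (∀ l ∈ E, ¬ SatLit α l) ∧ (∀ l ∈ D, ¬ SatLit α l) := by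
  classical
  refine ⟨fun v => if (v, true) ∈ E then false else if (v, false) ∈ E then true
    else if (v, true) ∈ D then false else true, ?_, ?_⟩
  · rintro ⟨v, b⟩ hl hs
    simp only [SatLit] at hs
    cases b with
    | true => simp [hl] at hs
    | false =>
      have ht : (v, true) ∉ E := fun ht => hE ⟨v, ht, hl⟩
      simp [ht, hl] at hs
  · rintro ⟨v, b⟩ hl hs
    have hne := h _ hl
    simp only [negLit, SatLit] at hne hs
    cases b with
    | true =>
      have hf : (v, false) ∉ E := hne
      by_cases ht : (v, true) ∈ E
      · simp [ht] at hs
      · simp [ht, hf, hl] at hs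
    | false =>
      have ht : (v, true) ∉ E := hne
      have htD : (v, true) ∉ D := fun htD => hD ⟨v, htD, hl⟩
      by_cases hf : (v, false) ∈ E
      · simp [ht, hf] at hs
      · simp [ht, hf, htD] at hs
end
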